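/- Let X_1,...,X_n be independent nonnegative random variables with order statistics X_[n] ≤ ... ≤ X_[1]. Then E[X_[1]] · E[X_[2]] ≤ E[X_[1] X_[2]] ≤ (E[X_[1]])² ≤ E[X_[1]²], where the middle inequality follows from the functional BKR inequality. -/

import Mathlib

open MeasureTheory ENNReal

/-!
`X_[1]` and `X_[2]` are coordinatewise monotone functions of independent coordinates, so
Harris's inequality, proved by induction on `n` from Chebyshev's correlation inequality on a
line, gives the first inequality and, applied to `X_[1]` twice, the last one. For nonnegative
coordinates `X_[1] X_[2] = max_{α ≠ β} X_α X_β`, so the middle inequality is the BKR inequality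
for the coordinate functions on the singletons `{α}` and `{β}`.
-/

/-- `f` depends (only) on the coordinates in `K`. -/
def DepOn {n : ℕ} (f : (Fin n → ℝ) → ℝ≥0∞) (K : Finset (Fin n)) : Prop :=
  ∀ x y : Fin n → ℝ, (∀ i ∈ K, x i = y i) → f x = f y

/-- The largest value among the coordinates of `x`. -/
noncomputable def ord1 {n : ℕ} (x : Fin n → ℝ) : ℝ := ⨆ i, x i

/-- The second largest value among the coordinates of `x`. -/
noncomputable def ord2 {n : ℕ} (x : Fin n → ℝ) : ℝ :=
  ⨆ p : {p : Fin n × Fin n // p.1 ≠ p.2}, min (x p.1.1) (x p.1.2)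

theorem CanonicallyOrderedAdd.mul_add_mul_le_mul_add_mul {R : Type*} [CommSemiring R]
    [PartialOrder R] [CanonicallyOrderedAdd R] {a b c d : R} (hab : a ≤ b) (hcd : c ≤ d) :
    a * d + b * c ≤ a * c + b * d := by
  obtain ⟨s, rfl⟩ := exists_add_of_le hab
  obtain ⟨t, rfl⟩ := exists_add_of_le hcd
  calc a * (c + t) + (a + s) * c ≤ a * (c + t) + (a + s) * c + s * t := le_self_add
    _ = a * c + (a + s) * (c + t) := by ring

theorem lintegral_mul_lintegral_le_of_monotone {α : Type*} [MeasurableSpace α] [LinearOrder α]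
    {ν : Measure α} [IsProbabilityMeasure ν] {f g : α → ℝ≥0∞}
    (hf : Measurable f) (hg : Measurable g) (hf_mono : Monotone f) (hg_mono : Monotone g) :
    (∫⁻ t, f t ∂ν) * ∫⁻ t, g t ∂ν ≤ ∫⁻ t, f t * g t ∂ν := by
  have rearrangement (x y : α) : f x * g y + f y * g x ≤ f x * g x + f y * g y := by
    rcases le_total x y with h | h
    · exact CanonicallyOrderedAdd.mul_add_mul_le_mul_add_mul (hf_mono h) (hg_mono h)
    · rw [add_comm (f x * g y), add_comm (f x * g x)]
      exact CanonicallyOrderedAdd.mul_add_mul_le_mul_add_mul (hf_mono h) (hg_mono h)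
  -- integrate the rearrangement inequality against `ν ⊗ ν` and cancel the factor `2`
  refine (ENNReal.mul_le_mul_iff_right two_ne_zero ofNat_ne_top).1 ?_
  calc 2 * ((∫⁻ t, f t ∂ν) * ∫⁻ t, g t ∂ν)
      = ∫⁻ x, ∫⁻ y, f x * g y + f y * g x ∂ν ∂ν := by
        have (x : α) : ∫⁻ y, f x * g y + f y * g x ∂ν
            = f x * ∫⁻ t, g t ∂ν + (∫⁻ t, f t ∂ν) * g x := by
          rw [lintegral_add_left (hg.const_mul _), lintegral_const_mul _ hg,
            lintegral_mul_const _ hf]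
        simp_rw [this]
        rw [lintegral_add_left (hf.mul_const _), lintegral_mul_const _ hf,
          lintegral_const_mul _ hg, two_mul]
    _ ≤ ∫⁻ x, ∫⁻ y, f x * g x + f y * g y ∂ν ∂ν :=
        lintegral_mono fun x ↦ lintegral_mono fun y ↦ rearrangement x y
    _ = 2 * ∫⁻ t, f t * g t ∂ν := by
        simp_rw [lintegral_add_left measurable_const, lintegral_add_right _ measurable_const,
          lintegral_const, measure_univ, mul_one, two_mul]

theorem measurable_fin_cons_uncurry {n : ℕ} {α : Type*} [MeasurableSpace α] :
    Measurable fun z : α × (Fin n → α) ↦ (Fin.cons z.1 z.2 : Fin (n + 1) → α) :=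
  measurable_pi_iff.2 <|
    Fin.cases measurable_fst fun j ↦ (measurable_pi_apply j).comp measurable_snd

theorem lintegral_pi_fin_succ {n : ℕ} {α : Type*} [MeasurableSpace α]
    (μ : Fin (n + 1) → Measure α) [∀ i, SigmaFinite (μ i)]
    {F : (Fin (n + 1) → α) → ℝ≥0∞} (hF : Measurable F) :
    ∫⁻ x, F x ∂Measure.pi μ =
      ∫⁻ t, ∫⁻ y, F (Fin.cons t y) ∂Measure.pi (fun j ↦ μ j.succ) ∂μ 0 := by
  rw [← (measurePreserving_piFinSuccAbove μ 0).symm.lintegral_comp hF, lintegral_prod]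
  · simp only [MeasurableEquiv.piFinSuccAbove_symm_apply, Fin.insertNthEquiv,
      Fin.insertNth_zero, Fin.succAbove_zero]
    rfl
  · exact (hF.comp (MeasurableEquiv.measurable _)).aemeasurable

theorem lintegral_pi_mul_lintegral_le_of_monotone {α : Type*} [MeasurableSpace α]
    [LinearOrder α] : ∀ {n : ℕ} (μ : Fin n → Measure α) [∀ i, IsProbabilityMeasure (μ i)]
    {f g : (Fin n → α) → ℝ≥0∞}, Measurable f → Measurable g → Monotone f → Monotone g →
    (∫⁻ x, f x ∂Measure.pi μ) * ∫⁻ x, g x ∂Measure.pi μ ≤ ∫⁻ x, f x * g x ∂Measure.pi μ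
  | 0, μ, _, f, g, _, _, _, _ => by
    simp [Unique.eq_default (α := Fin 0 → α)]
  | n + 1, μ, _, f, g, hf, hg, hf_mono, hg_mono => by
    have hcons : Measurable fun z : α × (Fin n → α) ↦ (Fin.cons z.1 z.2 : Fin (n + 1) → α) :=
      measurable_fin_cons_uncurry
    set ν : Measure (Fin n → α) := Measure.pi fun j ↦ μ j.succ
    calc (∫⁻ x, f x ∂Measure.pi μ) * ∫⁻ x, g x ∂Measure.pi μ
        = (∫⁻ t, ∫⁻ y, f (Fin.cons t y) ∂ν ∂μ 0) * ∫⁻ t, ∫⁻ y, g (Fin.cons t y) ∂ν ∂μ 0 := by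
          rw [lintegral_pi_fin_succ μ hf, lintegral_pi_fin_succ μ hg]
      _ ≤ ∫⁻ t, (∫⁻ y, f (Fin.cons t y) ∂ν) * ∫⁻ y, g (Fin.cons t y) ∂ν ∂μ 0 :=
          lintegral_mul_lintegral_le_of_monotone
            (hf.comp hcons).lintegral_prod_right' (hg.comp hcons).lintegral_prod_right'
            (fun s t hst ↦ lintegral_mono fun y ↦ hf_mono (Fin.cons_le_cons.2 ⟨hst, le_rfl⟩))
            (fun s t hst ↦ lintegral_mono fun y ↦ hg_mono (Fin.cons_le_cons.2 ⟨hst, le_rfl⟩))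
      _ ≤ ∫⁻ t, ∫⁻ y, f (Fin.cons t y) * g (Fin.cons t y) ∂ν ∂μ 0 := by
          refine lintegral_mono fun t ↦ lintegral_pi_mul_lintegral_le_of_monotone _
            (hf.comp (hcons.comp measurable_prodMk_left))
            (hg.comp (hcons.comp measurable_prodMk_left))
            (fun y z hyz ↦ hf_mono (Fin.cons_le_cons.2 ⟨le_rfl, hyz⟩))
            (fun y z hyz ↦ hg_mono (Fin.cons_le_cons.2 ⟨le_rfl, hyz⟩))
      _ = ∫⁻ x, f x * g x ∂Measure.pi μ := (lintegral_pi_fin_succ μ (hf.mul hg)).symm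

theorem ae_pi_forall_nonneg {ι : Type*} [Fintype ι] (μ : ι → Measure ℝ)
    [∀ i, SigmaFinite (μ i)] (h : ∀ i, μ i (Set.Iio 0) = 0) :
    ∀ᵐ x ∂Measure.pi μ, ∀ i, 0 ≤ x i :=
  Measure.ae_pi_le_pi <| Filter.eventually_pi fun i ↦
    ae_iff.2 <| measure_mono_null (fun _ ↦ not_le.1) (h i)

theorem depOn_singleton_comp_eval {n : ℕ} (φ : ℝ → ℝ≥0∞) (i : Fin n) :
    DepOn (fun x ↦ φ (x i)) {i} :=
  fun _ _ h ↦ congrArg φ (h i (Finset.mem_singleton_self i))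

section OrderStatistics

variable {n : ℕ}

theorem measurable_ord1 : Measurable (ord1 (n := n)) :=
  .iSup fun i ↦ measurable_pi_apply i

theorem measurable_ord2 : Measurable (ord2 (n := n)) :=
  .iSup fun _ ↦ (measurable_pi_apply _).min (measurable_pi_apply _)

theorem monotone_ord1 [NeZero n] : Monotone (ord1 (n := n)) := fun _ y hxy ↦
  ciSup_le fun i ↦ (hxy i).trans (le_ciSup (Finite.bddAbove_range y) i)

theorem monotone_ord2 (hn : 2 ≤ n) : Monotone (ord2 (n := n)) := fun _ y hxy ↦ by
  have : Nontrivial (Fin n) := Fin.nontrivial_iff_two_le.2 hn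
  have : Nonempty {p : Fin n × Fin n // p.1 ≠ p.2} :=
    let ⟨a, b, hab⟩ := exists_pair_ne (Fin n); ⟨⟨(a, b), hab⟩⟩
  exact ciSup_le fun p ↦ (min_le_min (hxy _) (hxy _)).trans
    (le_ciSup (f := fun p : {p : Fin n × Fin n // p.1 ≠ p.2} ↦ min (y p.1.1) (y p.1.2))
      (Finite.bddAbove_range _) p)

theorem ord1_nonneg [NeZero n] {x : Fin n → ℝ} (hx : ∀ i, 0 ≤ x i) : 0 ≤ ord1 x :=
  le_ciSup_of_le (Finite.bddAbove_range x) 0 (hx 0)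

theorem ofReal_ord1 [NeZero n] (x : Fin n → ℝ) :
    ENNReal.ofReal (ord1 x) = ⨆ i, ENNReal.ofReal (x i) :=
  ENNReal.ofReal_mono.map_ciSup_of_continuousAt ENNReal.continuous_ofReal.continuousAt
    (Finite.bddAbove_range x)

theorem exists_ne_ord1_eq_ord2_eq (hn : 2 ≤ n) (x : Fin n → ℝ) :
    ∃ i j, i ≠ j ∧ ord1 x = x i ∧ ord2 x = x j := by
  have : Nontrivial (Fin n) := Fin.nontrivial_iff_two_le.2 hn
  obtain ⟨i, hi⟩ := Finite.exists_max x
  have : Nonempty {k : Fin n // k ≠ i} := let ⟨k, hk⟩ := exists_ne i; ⟨⟨k, hk⟩⟩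
  obtain ⟨⟨j, hji⟩, hj⟩ := Finite.exists_max fun k : {k : Fin n // k ≠ i} ↦ x k
  have : Nonempty {p : Fin n × Fin n // p.1 ≠ p.2} := ⟨⟨(i, j), hji.symm⟩⟩
  refine ⟨i, j, hji.symm, le_antisymm (ciSup_le hi) (le_ciSup (Finite.bddAbove_range x) i),
    le_antisymm (ciSup_le fun ⟨⟨k, l⟩, hkl⟩ ↦ ?_) ?_⟩
  · rcases eq_or_ne k i with rfl | hki
    · exact (min_le_right _ _).trans (hj ⟨l, hkl.symm⟩)
    · exact (min_le_left _ _).trans (hj ⟨k, hki⟩)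
  · have := le_ciSup (Finite.bddAbove_range fun p : {p : Fin n × Fin n // p.1 ≠ p.2} ↦
      min (x p.1.1) (x p.1.2)) ⟨(i, j), hji.symm⟩
    rwa [min_eq_right (hi j)] at this

theorem ofReal_ord1_mul_ord2_le (hn : 2 ≤ n) {x : Fin n → ℝ} (hx : ∀ i, 0 ≤ x i) :
    ENNReal.ofReal (ord1 x * ord2 x) ≤ ⨆ (a : Fin n) (b : Fin n)
      (_ : Disjoint ({a} : Finset (Fin n)) {b}), ENNReal.ofReal (x a) * ENNReal.ofReal (x b) := by
  obtain ⟨i, j, hij, h1, h2⟩ := exists_ne_ord1_eq_ord2_eq hn x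
  rw [h1, h2, ENNReal.ofReal_mul (hx i)]
  exact le_iSup₂_of_le i j (le_iSup_of_le (Finset.disjoint_singleton.2 hij) le_rfl)

end OrderStatistics

/-- For independent nonnegative random variables `X_1, …, X_n` (joint law a product
measure `Measure.pi μ` on `Fin n → ℝ`, supported on nonnegative reals), with order
statistics `X_[1] ≥ X_[2] ≥ …`, the chain
`E[X_[1]] E[X_[2]] ≤ E[X_[1] X_[2]] ≤ (E[X_[1]])² ≤ E[X_[1]²]` holds, the middle
inequality coming from the functional BKR inequality (assumed as a hypothesis). -/
theorem order_statistics_chain {n : ℕ} (hn : 2 ≤ n)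
    (μ : Fin n → Measure ℝ) [∀ i, IsProbabilityMeasure (μ i)]
    (hpos : ∀ i, μ i (Set.Iio (0 : ℝ)) = 0)
    (ha : ∀ (ι κ : Type) [Countable ι] [Countable κ]
      (f : ι → (Fin n → ℝ) → ℝ≥0∞) (g : κ → (Fin n → ℝ) → ℝ≥0∞)
      (K : ι → Finset (Fin n)) (L : κ → Finset (Fin n)),
      (∀ a, Measurable (f a)) → (∀ b, Measurable (g b)) →
      (∀ a, DepOn (f a) (K a)) → (∀ b, DepOn (g b) (L b)) →
      ∫⁻ x, ⨆ (a : ι) (b : κ) (_ : Disjoint (K a) (L b)), f a x * g b x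
          ∂(Measure.pi μ) ≤
        (∫⁻ x, ⨆ a, f a x ∂(Measure.pi μ)) * ∫⁻ x, ⨆ b, g b x ∂(Measure.pi μ)) :
    (∫⁻ x, ENNReal.ofReal (ord1 x) ∂(Measure.pi μ)) *
        (∫⁻ x, ENNReal.ofReal (ord2 x) ∂(Measure.pi μ)) ≤
      ∫⁻ x, ENNReal.ofReal (ord1 x * ord2 x) ∂(Measure.pi μ) ∧
    (∫⁻ x, ENNReal.ofReal (ord1 x * ord2 x) ∂(Measure.pi μ)) ≤
      (∫⁻ x, ENNReal.ofReal (ord1 x) ∂(Measure.pi μ)) ^ 2 ∧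
    (∫⁻ x, ENNReal.ofReal (ord1 x) ∂(Measure.pi μ)) ^ 2 ≤
      ∫⁻ x, ENNReal.ofReal (ord1 x ^ 2) ∂(Measure.pi μ) := by
  have : NeZero n := ⟨by omega⟩
  have hnonneg := ae_pi_forall_nonneg μ hpos
  have hX1 := (measurable_ord1 (n := n)).ennreal_ofReal
  have hX1_mono := ENNReal.ofReal_mono.comp (monotone_ord1 (n := n))
  refine ⟨?_, ?_, ?_⟩
  · calc _ ≤ ∫⁻ x, ENNReal.ofReal (ord1 x) * ENNReal.ofReal (ord2 x) ∂Measure.pi μ :=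
          lintegral_pi_mul_lintegral_le_of_monotone μ hX1 measurable_ord2.ennreal_ofReal
            hX1_mono (ENNReal.ofReal_mono.comp (monotone_ord2 hn))
      _ = _ := lintegral_congr_ae <| hnonneg.mono fun x hx ↦
          (ENNReal.ofReal_mul (ord1_nonneg hx)).symm
  · have hcoord (i : Fin n) : Measurable fun x : Fin n → ℝ ↦ ENNReal.ofReal (x i) :=
      (measurable_pi_apply i).ennreal_ofReal
    calc _ ≤ ∫⁻ x, ⨆ (a : Fin n) (b : Fin n) (_ : Disjoint ({a} : Finset (Fin n)) {b}),
            ENNReal.ofReal (x a) * ENNReal.ofReal (x b) ∂Measure.pi μ :=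
          lintegral_mono_ae <| hnonneg.mono fun x hx ↦ ofReal_ord1_mul_ord2_le hn hx
      _ ≤ _ := ha (Fin n) (Fin n) _ _ (fun a ↦ {a}) (fun b ↦ {b}) hcoord hcoord
          (depOn_singleton_comp_eval _) (depOn_singleton_comp_eval _)
      _ = _ := by simp_rw [← ofReal_ord1, sq]
  · calc _ = (∫⁻ x, ENNReal.ofReal (ord1 x) ∂Measure.pi μ) *
            ∫⁻ x, ENNReal.ofReal (ord1 x) ∂Measure.pi μ := sq _
      _ ≤ ∫⁻ x, ENNReal.ofReal (ord1 x) * ENNReal.ofReal (ord1 x) ∂Measure.pi μ :=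
          lintegral_pi_mul_lintegral_le_of_monotone μ hX1 hX1 hX1_mono hX1_mono
      _ = _ := lintegral_congr_ae <| hnonneg.mono fun x hx ↦ by
          rw [ENNReal.ofReal_pow (ord1_nonneg hx), sq]
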